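/- arXiv:1211.1123 — 2 statements merged into one kernel-verified Lean document; each statement's English description precedes it below -/
import Mathlib

section
/- Characterization of vanishing descent: Under assumptions (H1) and (H2), for every x ∈ S the equality ∇θ(x)F(x) = 0 holds if and only if the following three conditions hold simultaneously: (v(x))⁺ = 0; g_j(x)v_j(x) = 0 for j = 1,…,k; and ∇θ(x)H(x)[I_n − B(x)ᵀQ(x)⁻¹B(x)]H(x) = 0. -/
open Matrix Set Filter

noncomputable section

/-- The gradient of `f : ℝⁿ → ℝ` at `x`, as the vector of partial derivatives. -/
def grad {n : ℕ} (f : (Fin n → ℝ) → ℝ) (x : Fin n → ℝ) : Fin n → ℝ :=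
  fun j => fderiv ℝ f x (Pi.single j 1)

/-- The feasible set `S`. -/
def feas {n m k : ℕ} (h : Fin m → (Fin n → ℝ) → ℝ) (g : Fin k → (Fin n → ℝ) → ℝ) :
    Set (Fin n → ℝ) :=
  {x | (∀ i, h i x = 0) ∧ (∀ j, g j x ≤ 0)}

/-- Jacobian of the equality constraints (rows `∇h_i(x)`). -/
def matA {n m : ℕ} (h : Fin m → (Fin n → ℝ) → ℝ) (x : Fin n → ℝ) :
    Matrix (Fin m) (Fin n) ℝ :=
  Matrix.of fun i => grad (h i) x

/-- Jacobian of the inequality constraints (rows `∇g_j(x)`). -/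
def matB {n k : ℕ} (g : Fin k → (Fin n → ℝ) → ℝ) (x : Fin n → ℝ) :
    Matrix (Fin k) (Fin n) ℝ :=
  Matrix.of fun j => grad (g j) x

/-- `H(x) = I − Aᵀ(AAᵀ)⁻¹A`. -/
def matH {n m : ℕ} (h : Fin m → (Fin n → ℝ) → ℝ) (x : Fin n → ℝ) :
    Matrix (Fin n) (Fin n) ℝ :=
  1 - (matA h x)ᵀ * (matA h x * (matA h x)ᵀ)⁻¹ * matA h x

/-- `Q(x) = B(x)H(x)B(x)ᵀ − diag(g(x))`. -/
def matQ {n m k : ℕ} (h : Fin m → (Fin n → ℝ) → ℝ) (g : Fin k → (Fin n → ℝ) → ℝ)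
    (x : Fin n → ℝ) : Matrix (Fin k) (Fin k) ℝ :=
  matB g x * matH h x * (matB g x)ᵀ - Matrix.diagonal (fun j => g j x)

/-- Assumption (H1). -/
def hypH1 {n m k : ℕ} (θ : (Fin n → ℝ) → ℝ) (h : Fin m → (Fin n → ℝ) → ℝ)
    (g : Fin k → (Fin n → ℝ) → ℝ) : Prop :=
  (feas h g).Nonempty ∧ ∀ x₀ ∈ feas h g, IsCompact {x ∈ feas h g | θ x ≤ θ x₀}

/-- Assumption (H2). -/
def hypH2 {n m k : ℕ} (h : Fin m → (Fin n → ℝ) → ℝ) (g : Fin k → (Fin n → ℝ) → ℝ) : Prop :=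
  ∀ x ∈ feas h g,
    LinearIndependent ℝ
      (Sum.elim (fun i : Fin m => grad (h i) x)
        (fun j : {j : Fin k // g j x = 0} => grad (g (j : Fin k)) x))

/-- `P(x) = Q(x)⁻¹ B(x) H(x)`. -/
def matP {n m k : ℕ} (h : Fin m → (Fin n → ℝ) → ℝ) (g : Fin k → (Fin n → ℝ) → ℝ)
    (x : Fin n → ℝ) : Matrix (Fin k) (Fin n) ℝ :=
  (matQ h g x)⁻¹ * matB g x * matH h x

/-- `v(x) = P(x)(∇θ(x))ᵀ`. -/
def vecv {n m k : ℕ} (θ : (Fin n → ℝ) → ℝ) (h : Fin m → (Fin n → ℝ) → ℝ)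
    (g : Fin k → (Fin n → ℝ) → ℝ) (x : Fin n → ℝ) : Fin k → ℝ :=
  (matP h g x).mulVec (grad θ x)

/-- componentwise positive part. -/
def pPart {k : ℕ} (w : Fin k → ℝ) : Fin k → ℝ := fun j => max 0 (w j)

/-- `R₃(x)`. -/
def matR3 {n k : ℕ} (b c : Fin k → (Fin n → ℝ) → ℝ) (p : Fin k → ℕ) (x : Fin n → ℝ)
    (v : Fin k → ℝ) : Matrix (Fin k) (Fin k) ℝ :=
  Matrix.diagonal (fun j => b j x + c j x * (max 0 (v j)) ^ (2 * p j))

/-- The vector field `F(x)` of (2.4), (2.5). -/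
def vecF {n m k : ℕ} (θ : (Fin n → ℝ) → ℝ) (h : Fin m → (Fin n → ℝ) → ℝ)
    (g : Fin k → (Fin n → ℝ) → ℝ)
    (R1 : (Fin n → ℝ) → Matrix (Fin n) (Fin n) ℝ)
    (R2 : (Fin n → ℝ) → Matrix (Fin k) (Fin k) ℝ)
    (a b c : Fin k → (Fin n → ℝ) → ℝ) (p : Fin k → ℕ) (x : Fin n → ℝ) : Fin n → ℝ :=
  -(((matH h x - (matP h g x)ᵀ * matQ h g x * matP h g x) * R1 x *
      (matH h x - (matP h g x)ᵀ * matQ h g x * matP h g x)).mulVec (grad θ x))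
  - ((matP h g x)ᵀ * Matrix.diagonal (fun j => g j x) *
      (R2 x * Matrix.diagonal (fun j => g j x) - Matrix.diagonal (fun j => a j x))).mulVec
        (vecv θ h g x)
  - ((matP h g x)ᵀ * matR3 b c p x (vecv θ h g x)).mulVec (pPart (vecv θ h g x))

/-- The set `Φ` of KKT points. -/
def KKTset {n m k : ℕ} (θ : (Fin n → ℝ) → ℝ) (h : Fin m → (Fin n → ℝ) → ℝ)
    (g : Fin k → (Fin n → ℝ) → ℝ) : Set (Fin n → ℝ) :=
  {x | x ∈ feas h g ∧ ∃ (lam : Fin m → ℝ) (mu : Fin k → ℝ),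
    (∀ j, 0 ≤ mu j) ∧
    grad θ x + (∑ i, lam i • grad (h i) x) + (∑ j, mu j • grad (g j) x) = 0 ∧
    (∑ j, mu j * g j x) = 0}


/-!
Write `u = ∇θ(x)`, `D = diag g(x)` and `M = H - PᵀQP`. Because `H` is a symmetric projection and
`P = Q⁻¹BH`, `M = H(I - BᵀQ⁻¹B)H` is symmetric, and `∇θ(x)F(x)` splits as
`-[(Mu)ᵀR₁(Mu) + (Dv)ᵀR₂(Dv) + Σ aⱼ(-gⱼ)vⱼ² + Σ (R₃)ⱼⱼ(vⱼ⁺)²]`. On `S` every summand is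
nonnegative, so the sum vanishes iff each summand does; positive definiteness of `R₁`, of `R₂` or
`diag a`, and `bⱼ + cⱼ > 0` turn the three vanishing summands into `Mu = 0`, `gⱼvⱼ = 0` and
`v⁺ = 0`.
-/

namespace Matrix

variable {m n R : Type*} [CommRing R]

theorem nonsing_inv_mul_mul_nonsing_inv [Fintype n] [DecidableEq n] (A : Matrix n n R) :
    A⁻¹ * A * A⁻¹ = A⁻¹ := by
  by_cases hA : IsUnit A.det
  · rw [nonsing_inv_mul _ hA, Matrix.one_mul]
  · simp [nonsing_inv_apply_not_isUnit _ hA]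

theorem isIdempotentElem_transpose_mul_inv_mul [Fintype m] [Fintype n] [DecidableEq m]
    (A : Matrix m n R) : IsIdempotentElem (Aᵀ * (A * Aᵀ)⁻¹ * A) :=
  calc Aᵀ * (A * Aᵀ)⁻¹ * A * (Aᵀ * (A * Aᵀ)⁻¹ * A)
      = Aᵀ * ((A * Aᵀ)⁻¹ * (A * Aᵀ) * (A * Aᵀ)⁻¹) * A := by simp only [Matrix.mul_assoc]
    _ = Aᵀ * (A * Aᵀ)⁻¹ * A := by rw [nonsing_inv_mul_mul_nonsing_inv, Matrix.mul_assoc]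

theorem isSymm_one_sub_transpose_mul_inv_mul [Fintype m] [Fintype n] [DecidableEq m]
    [DecidableEq n] (A : Matrix m n R) : (1 - Aᵀ * (A * Aᵀ)⁻¹ * A).IsSymm := by
  simp [IsSymm, transpose_sub, transpose_mul, transpose_nonsing_inv, Matrix.mul_assoc]

theorem IsSymm.mul_mul_transpose [Fintype n] {A : Matrix n n R} (hA : A.IsSymm)
    (B : Matrix m n R) : (B * A * Bᵀ).IsSymm := by
  simp [IsSymm, transpose_mul, hA.eq, Matrix.mul_assoc]

theorem IsSymm.mul_one_sub_transpose_mul_inv_mul_mul [Fintype m] [Fintype n] [DecidableEq m]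
    [DecidableEq n] {H : Matrix n n R} {Q : Matrix m m R} (hH : H.IsSymm) (hQ : Q.IsSymm)
    (B : Matrix m n R) : (H * (1 - Bᵀ * Q⁻¹ * B) * H).IsSymm := by
  simp [IsSymm, transpose_mul, transpose_sub, transpose_nonsing_inv, hH.eq, hQ.eq,
    Matrix.mul_assoc]

theorem sub_transpose_mul_mul_eq [Fintype m] [Fintype n] [DecidableEq m] [DecidableEq n]
    {H : Matrix n n R} {Q : Matrix m m R} (hH : H.IsSymm) (hHH : IsIdempotentElem H) (hQ : Q.IsSymm)
    (B : Matrix m n R) :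
    H - (Q⁻¹ * B * H)ᵀ * Q * (Q⁻¹ * B * H) = H * (1 - Bᵀ * Q⁻¹ * B) * H := by
  have hPQP : (Q⁻¹ * B * H)ᵀ * Q * (Q⁻¹ * B * H) = H * (Bᵀ * Q⁻¹ * B) * H := by
    rw [transpose_mul, transpose_mul, transpose_nonsing_inv, hH.eq, hQ.eq]
    calc H * (Bᵀ * Q⁻¹) * Q * (Q⁻¹ * B * H)
        = H * Bᵀ * (Q⁻¹ * Q * Q⁻¹) * B * H := by simp only [Matrix.mul_assoc]
      _ = H * (Bᵀ * Q⁻¹ * B) * H := by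
        rw [nonsing_inv_mul_mul_nonsing_inv]; simp only [Matrix.mul_assoc]
  rw [hPQP, Matrix.mul_sub, Matrix.mul_one, Matrix.sub_mul, hHH.eq]

theorem IsSymm.vecMul_eq_mulVec [Fintype n] {A : Matrix n n R} (hA : A.IsSymm) (u : n → R) :
    u ᵥ* A = A *ᵥ u := by
  conv_lhs => rw [← hA.eq]
  exact vecMul_transpose A u

theorem dotProduct_mul_mul_mulVec_of_isSymm [Fintype n] {A : Matrix n n R} (hA : A.IsSymm)
    (B : Matrix n n R) (u : n → R) :
    u ⬝ᵥ ((A * B * A) *ᵥ u) = (A *ᵥ u) ⬝ᵥ (B *ᵥ (A *ᵥ u)) := by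
  rw [← mulVec_mulVec, ← mulVec_mulVec, dotProduct_mulVec, hA.vecMul_eq_mulVec]

theorem dotProduct_transpose_mul_mulVec [Fintype m] [Fintype n] (u : n → R) (P : Matrix m n R)
    (X : Matrix m m R) (w : m → R) : u ⬝ᵥ ((Pᵀ * X) *ᵥ w) = (P *ᵥ u) ⬝ᵥ (X *ᵥ w) := by
  rw [← mulVec_mulVec, dotProduct_mulVec, vecMul_transpose]

theorem PosDef.dotProduct_mulVec_self_eq_zero_iff [Fintype n] {A : Matrix n n ℝ}
    (hA : A.PosDef) {x : n → ℝ} : x ⬝ᵥ (A *ᵥ x) = 0 ↔ x = 0 := by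
  refine ⟨fun hx => ?_, fun hx => by simp [hx]⟩
  by_contra hne
  simpa [hx] using hA.dotProduct_mulVec_pos hne

end Matrix

open Finset

theorem add_mul_pow_mul_sq_eq_zero_iff {b c t : ℝ} (hb : 0 ≤ b) (hc : 0 ≤ c) (hbc : 0 < b + c)
    (ht : 0 ≤ t) (q : ℕ) : (b + c * t ^ q) * t ^ 2 = 0 ↔ t = 0 := by
  refine ⟨fun h => ?_, fun h => by simp [h]⟩
  by_contra ht0
  have htpos : 0 < t := ht.lt_of_ne' ht0
  have : 0 < b + c * t ^ q := by
    rcases hb.lt_or_eq with hb | hb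
    · positivity
    · rw [← hb, zero_add] at hbc ⊢; positivity
  exact (mul_pos this (by positivity)).ne' h

theorem quadForm_diagonal_mulVec_add_sum_nonneg {ι : Type*} [Fintype ι] [DecidableEq ι]
    {A : Matrix ι ι ℝ} {a d w : ι → ℝ} (hA : A.PosSemidef) (ha : ∀ j, 0 ≤ a j)
    (hd : ∀ j, d j ≤ 0) :
    0 ≤ (diagonal d *ᵥ w) ⬝ᵥ (A *ᵥ (diagonal d *ᵥ w)) + ∑ j, a j * -d j * w j ^ 2 := by
  have hquad := hA.dotProduct_mulVec_nonneg (diagonal d *ᵥ w)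
  have hsum : 0 ≤ ∑ j, a j * -d j * w j ^ 2 := sum_nonneg fun j _ =>
    mul_nonneg (mul_nonneg (ha j) (neg_nonneg.2 (hd j))) (sq_nonneg _)
  simp only [star_trivial] at hquad
  positivity

theorem quadForm_diagonal_mulVec_add_sum_eq_zero_iff {ι : Type*} [Fintype ι] [DecidableEq ι]
    {A : Matrix ι ι ℝ} {a d w : ι → ℝ} (hA : A.PosSemidef) (ha : ∀ j, 0 ≤ a j)
    (hd : ∀ j, d j ≤ 0) (hpd : A.PosDef ∨ (diagonal a).PosDef) :
    (diagonal d *ᵥ w) ⬝ᵥ (A *ᵥ (diagonal d *ᵥ w)) + ∑ j, a j * -d j * w j ^ 2 = 0 ↔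
      ∀ j, d j * w j = 0 := by
  have hquad := hA.dotProduct_mulVec_nonneg (diagonal d *ᵥ w)
  simp only [star_trivial] at hquad
  have hterm : ∀ j, 0 ≤ a j * -d j * w j ^ 2 := fun j =>
    mul_nonneg (mul_nonneg (ha j) (neg_nonneg.2 (hd j))) (sq_nonneg _)
  have hDw : diagonal d *ᵥ w = 0 ↔ ∀ j, d j * w j = 0 := by
    simp only [funext_iff, mulVec_diagonal, Pi.zero_apply]
  rw [add_eq_zero_iff_of_nonneg hquad (sum_nonneg fun j _ => hterm j),
    sum_eq_zero_iff_of_nonneg fun j _ => hterm j]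
  constructor
  · rintro ⟨hquad0, hsum0⟩
    rcases hpd with hApd | hapd
    · exact hDw.1 (hApd.dotProduct_mulVec_self_eq_zero_iff.1 hquad0)
    · intro j
      have hdw : (a j * -(d j * w j)) * w j = 0 := by linear_combination hsum0 j (mem_univ j)
      rcases mul_eq_zero.1 hdw with h | h
      · simpa using (mul_eq_zero.1 h).resolve_left (posDef_diagonal_iff.1 hapd j).ne'
      · simp [h]
  · intro hdw
    refine ⟨by simp [hDw.2 hdw], fun j _ => ?_⟩
    linear_combination (-(a j * w j)) * hdw j

theorem mul_pPart_self {k : ℕ} (w : Fin k → ℝ) (j : Fin k) :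
    w j * pPart w j = pPart w j ^ 2 := by
  rcases le_total (w j) 0 with hw | hw <;> simp [pPart, hw, sq]

theorem sum_add_mul_pow_mul_sq_pPart_nonneg {k : ℕ} {b c : Fin k → ℝ} (w : Fin k → ℝ)
    (q : Fin k → ℕ) (hb : ∀ j, 0 ≤ b j) (hc : ∀ j, 0 ≤ c j) :
    0 ≤ ∑ j, (b j + c j * pPart w j ^ q j) * pPart w j ^ 2 :=
  sum_nonneg fun j _ => by
    have := hb j; have := hc j; have : 0 ≤ pPart w j := le_max_left _ _
    positivity

theorem sum_add_mul_pow_mul_sq_pPart_eq_zero_iff {k : ℕ} {b c w : Fin k → ℝ} (q : Fin k → ℕ)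
    (hb : ∀ j, 0 ≤ b j) (hc : ∀ j, 0 ≤ c j) (hbc : ∀ j, 0 < b j + c j) :
    ∑ j, (b j + c j * pPart w j ^ q j) * pPart w j ^ 2 = 0 ↔ pPart w = 0 := by
  have hpos : ∀ j, 0 ≤ pPart w j := fun j => le_max_left _ _
  rw [sum_eq_zero_iff_of_nonneg fun j _ => by
      have := hb j; have := hc j; have := hpos j; positivity,
    funext_iff]
  exact forall_congr' fun j => by
    simpa using add_mul_pow_mul_sq_eq_zero_iff (hb j) (hc j) (hbc j) (hpos j) (q j)

section DescentField

variable {n m k : ℕ} (θ : (Fin n → ℝ) → ℝ) (h : Fin m → (Fin n → ℝ) → ℝ)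
  (g : Fin k → (Fin n → ℝ) → ℝ) (x : Fin n → ℝ)

theorem matH_isSymm : (matH h x).IsSymm :=
  isSymm_one_sub_transpose_mul_inv_mul _

theorem matH_isIdempotentElem : IsIdempotentElem (matH h x) :=
  (isIdempotentElem_transpose_mul_inv_mul _).one_sub

theorem matQ_isSymm : (matQ h g x).IsSymm :=
  ((matH_isSymm h x).mul_mul_transpose _).sub (isSymm_diagonal _)

theorem matH_sub_transpose_matP_mul_matQ_mul_matP :
    matH h x - (matP h g x)ᵀ * matQ h g x * matP h g x =
      matH h x * (1 - (matB g x)ᵀ * (matQ h g x)⁻¹ * matB g x) * matH h x :=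
  sub_transpose_mul_mul_eq (matH_isSymm h x) (matH_isIdempotentElem h x) (matQ_isSymm h g x) _

theorem grad_dotProduct_vecF (R1 : (Fin n → ℝ) → Matrix (Fin n) (Fin n) ℝ)
    (R2 : (Fin n → ℝ) → Matrix (Fin k) (Fin k) ℝ) (a b c : Fin k → (Fin n → ℝ) → ℝ)
    (p : Fin k → ℕ) :
    grad θ x ⬝ᵥ vecF θ h g R1 R2 a b c p x =
      -(((matH h x * (1 - (matB g x)ᵀ * (matQ h g x)⁻¹ * matB g x) * matH h x) *ᵥ grad θ x) ⬝ᵥ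
          (R1 x *ᵥ ((matH h x * (1 - (matB g x)ᵀ * (matQ h g x)⁻¹ * matB g x) * matH h x) *ᵥ
            grad θ x)) +
        (((diagonal fun j => g j x) *ᵥ vecv θ h g x) ⬝ᵥ
            (R2 x *ᵥ ((diagonal fun j => g j x) *ᵥ vecv θ h g x)) +
          ∑ j, a j x * -g j x * vecv θ h g x j ^ 2) +
        ∑ j, (b j x + c j x * pPart (vecv θ h g x) j ^ (2 * p j)) *
          pPart (vecv θ h g x) j ^ 2) := by
  rw [vecF]
  set v := vecv θ h g x
  have hPv : matP h g x *ᵥ grad θ x = v := rfl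
  have hga : v ⬝ᵥ ((diagonal fun j => g j x) * diagonal fun j => a j x) *ᵥ v =
      -∑ j, a j x * -g j x * v j ^ 2 := by
    simp only [diagonal_mul_diagonal, dotProduct, mulVec_diagonal, ← sum_neg_distrib]
    exact sum_congr rfl fun j _ => by ring
  have hR3 : v ⬝ᵥ (matR3 b c p x v *ᵥ pPart v) =
      ∑ j, (b j x + c j x * pPart v j ^ (2 * p j)) * pPart v j ^ 2 := by
    simp only [matR3, dotProduct, mulVec_diagonal]
    exact sum_congr rfl fun j _ => by rw [← mul_pPart_self]; simp only [pPart]; ring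
  rw [matH_sub_transpose_matP_mul_matQ_mul_matP, dotProduct_sub, dotProduct_sub,
    dotProduct_neg, dotProduct_mul_mul_mulVec_of_isSymm
      ((matH_isSymm h x).mul_one_sub_transpose_mul_inv_mul_mul (matQ_isSymm h g x) _),
    Matrix.mul_assoc (matP h g x)ᵀ, dotProduct_transpose_mul_mulVec,
    dotProduct_transpose_mul_mulVec, hPv,
    Matrix.mul_sub (diagonal fun j => g j x), sub_mulVec, dotProduct_sub,
    ← Matrix.mul_assoc (diagonal fun j => g j x),
    dotProduct_mul_mul_mulVec_of_isSymm (isSymm_diagonal _), hga, hR3]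
  ring

end DescentField

theorem stmt_9_general
    {n m k : ℕ}
    (θ : (Fin n → ℝ) → ℝ) (h : Fin m → (Fin n → ℝ) → ℝ) (g : Fin k → (Fin n → ℝ) → ℝ)
    (R1 : (Fin n → ℝ) → Matrix (Fin n) (Fin n) ℝ)
    (R2 : (Fin n → ℝ) → Matrix (Fin k) (Fin k) ℝ)
    (a b c : Fin k → (Fin n → ℝ) → ℝ) (p : Fin k → ℕ)
    (hR1pd : ∀ x, (R1 x).PosDef)
    (hR2psd : ∀ x, (R2 x).PosSemidef)
    (ha0 : ∀ j x, 0 ≤ a j x) (hb0 : ∀ j x, 0 ≤ b j x) (hc0 : ∀ j x, 0 ≤ c j x)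
    (hbc : ∀ x ∈ feas h g, ∀ j, 0 < b j x + c j x)
    (hpd : ∀ x ∈ feas h g, (R2 x).PosDef ∨ (Matrix.diagonal fun j => a j x).PosDef) :
    ∀ x ∈ feas h g,
      (grad θ x ⬝ᵥ vecF θ h g R1 R2 a b c p x = 0 ↔
        (pPart (vecv θ h g x) = 0 ∧
         (∀ j, g j x * vecv θ h g x j = 0) ∧
         Matrix.vecMul (grad θ x)
           (matH h x * (1 - (matB g x)ᵀ * (matQ h g x)⁻¹ * matB g x) * matH h x) = 0)) := by
  intro x hx
  set M := matH h x * (1 - (matB g x)ᵀ * (matQ h g x)⁻¹ * matB g x) * matH h x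
  have hM : M.IsSymm :=
    (matH_isSymm h x).mul_one_sub_transpose_mul_inv_mul_mul (matQ_isSymm h g x) _
  have hq1 : 0 ≤ (M *ᵥ grad θ x) ⬝ᵥ (R1 x *ᵥ (M *ᵥ grad θ x)) := by
    simpa using (hR1pd x).posSemidef.dotProduct_mulVec_nonneg (M *ᵥ grad θ x)
  have hq23 :=
    quadForm_diagonal_mulVec_add_sum_nonneg (w := vecv θ h g x) (hR2psd x) (ha0 · x) hx.2
  have hq4 := sum_add_mul_pow_mul_sq_pPart_nonneg (vecv θ h g x) (2 * p ·) (hb0 · x) (hc0 · x)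
  rw [grad_dotProduct_vecF, neg_eq_zero, add_eq_zero_iff_of_nonneg (add_nonneg hq1 hq23) hq4,
    add_eq_zero_iff_of_nonneg hq1 hq23, (hR1pd x).dotProduct_mulVec_self_eq_zero_iff,
    quadForm_diagonal_mulVec_add_sum_eq_zero_iff (hR2psd x) (ha0 · x) hx.2 (hpd x hx),
    sum_add_mul_pow_mul_sq_pPart_eq_zero_iff _ (hb0 · x) (hc0 · x) (hbc x hx), hM.vecMul_eq_mulVec]
  tauto

/-- Characterization of vanishing descent: for `x ∈ S`, `∇θ(x)F(x) = 0` iff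
`(v(x))⁺ = 0`, `gⱼ(x)vⱼ(x) = 0` for all `j`, and
`∇θ(x)H(x)[I − B(x)ᵀQ(x)⁻¹B(x)]H(x) = 0`. -/
theorem stmt_9
    {n m k : ℕ} (hmn : m < n)
    (θ : (Fin n → ℝ) → ℝ) (h : Fin m → (Fin n → ℝ) → ℝ) (g : Fin k → (Fin n → ℝ) → ℝ)
    (hθ : ContDiff ℝ 2 θ) (hhC : ∀ i, ContDiff ℝ 2 (h i)) (hgC : ∀ j, ContDiff ℝ 2 (g j))
    (hH1 : hypH1 θ h g) (hH2 : hypH2 h g)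
    (R1 : (Fin n → ℝ) → Matrix (Fin n) (Fin n) ℝ)
    (R2 : (Fin n → ℝ) → Matrix (Fin k) (Fin k) ℝ)
    (a b c : Fin k → (Fin n → ℝ) → ℝ) (p : Fin k → ℕ)
    (hR1C : ∀ i j, ContDiff ℝ 1 fun x => R1 x i j)
    (hR1pd : ∀ x, (R1 x).PosDef)
    (hR2C : ∀ i j, ContDiff ℝ 1 fun x => R2 x i j)
    (hR2psd : ∀ x, (R2 x).PosSemidef)
    (haC : ∀ j, ContDiff ℝ 1 (a j)) (hbC : ∀ j, ContDiff ℝ 1 (b j))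
    (hcC : ∀ j, ContDiff ℝ 1 (c j))
    (ha0 : ∀ j x, 0 ≤ a j x) (hb0 : ∀ j x, 0 ≤ b j x) (hc0 : ∀ j x, 0 ≤ c j x)
    (hbc : ∀ x ∈ feas h g, ∀ j, 0 < b j x + c j x)
    (hpd : ∀ x ∈ feas h g, (R2 x).PosDef ∨ (Matrix.diagonal fun j => a j x).PosDef)
    (hp : ∀ j, 1 ≤ p j) :
    ∀ x ∈ feas h g,
      (grad θ x ⬝ᵥ vecF θ h g R1 R2 a b c p x = 0 ↔
        (pPart (vecv θ h g x) = 0 ∧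
         (∀ j, g j x * vecv θ h g x j = 0) ∧
         Matrix.vecMul (grad θ x)
           (matH h x * (1 - (matB g x)ᵀ * (matQ h g x)⁻¹ * matB g x) * matH h x) = 0)) :=
  stmt_9_general θ h g R1 R2 a b c p hR1pd hR2psd ha0 hb0 hc0 hbc hpd

end
end

section
/- Under assumptions (H1) and (H2), every KKT point is an equilibrium of the vector field: if x ∈ Φ then F(x) = 0. -/
/-!
At a KKT point `x` with multipliers `(λ, μ)`, complementarity makes `diag(g(x)) μ = 0`, so
`Qμ = BHBᵀμ`; stationarity `∇θ = -Aᵀλ - Bᵀμ` and `HAᵀ = 0` then give `BH∇θ = -Qμ`, i.e. `v = -μ`.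
Assumption (H2) is what makes `AAᵀ` and `Q = (HBᵀ)ᵀ(HBᵀ) - diag(g)` invertible: `H` is a
symmetric idempotent, and a vector killed by `HBᵀ` and supported on the active constraints is
zero by linear independence. From `v = -μ ≤ 0` we get `v⁺ = 0` and `diag(g) v = 0`, while
`PᵀQ = HBᵀ` turns the first term into `H(∇θ + Bᵀμ) = -HAᵀλ = 0`; so all three terms of `F`
vanish.
-/

open Matrix Set Filter

noncomputable section

namespace Matrix

section KerProj

variable {R m n k : Type*} [CommRing R] [Fintype m] [Fintype n] [DecidableEq m] [DecidableEq n]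
  (A : Matrix m n R)

/-- The orthogonal projector onto `ker A` when `A` has linearly independent rows. -/
def kerProj : Matrix n n R := 1 - Aᵀ * (A * Aᵀ)⁻¹ * A

theorem transpose_kerProj : (kerProj A)ᵀ = kerProj A := by
  have hsymm : (A * Aᵀ)ᵀ = A * Aᵀ := by rw [transpose_mul, transpose_transpose]
  rw [kerProj, transpose_sub, transpose_one, transpose_mul, transpose_mul, transpose_transpose,
    transpose_nonsing_inv, hsymm, Matrix.mul_assoc]

variable {A}

theorem kerProj_mul_transpose (hA : IsUnit (A * Aᵀ).det) : kerProj A * Aᵀ = 0 := by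
  rw [kerProj, Matrix.sub_mul, Matrix.one_mul, Matrix.mul_assoc, Matrix.mul_assoc,
    nonsing_inv_mul _ hA, Matrix.mul_one, sub_self]

theorem kerProj_mul_self (hA : IsUnit (A * Aᵀ).det) : kerProj A * kerProj A = kerProj A := by
  nth_rewrite 2 [kerProj]
  rw [Matrix.mul_sub, Matrix.mul_one, ← Matrix.mul_assoc, ← Matrix.mul_assoc,
    kerProj_mul_transpose hA, Matrix.zero_mul, Matrix.zero_mul, sub_zero]

theorem mul_kerProj_mul_transpose (hA : IsUnit (A * Aᵀ).det) [Fintype k] (B : Matrix k n R) :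
    B * kerProj A * Bᵀ = (kerProj A * Bᵀ)ᵀ * (kerProj A * Bᵀ) := by
  rw [transpose_mul, transpose_transpose, transpose_kerProj, ← Matrix.mul_assoc,
    Matrix.mul_assoc B (kerProj A) (kerProj A), kerProj_mul_self hA]

theorem exists_transpose_mulVec_eq_of_kerProj_mulVec_eq_zero {w : n → R}
    (hw : kerProj A *ᵥ w = 0) : ∃ u, Aᵀ *ᵥ u = w := by
  refine ⟨((A * Aᵀ)⁻¹ * A) *ᵥ w, ?_⟩
  rw [kerProj, sub_mulVec, one_mulVec, sub_eq_zero] at hw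
  rw [mulVec_mulVec, ← Matrix.mul_assoc, ← hw]

end KerProj

theorem isUnit_det_mul_transpose_of_linearIndependent {m n : Type*} [Fintype m]
    [Fintype n] [DecidableEq m] {A : Matrix m n ℝ} (hA : LinearIndependent ℝ A) :
    IsUnit (A * Aᵀ).det := by
  have hpd := PosDef.mul_conjTranspose_self A (vecMul_injective_iff.mpr hA)
  rw [conjTranspose_eq_transpose_of_trivial] at hpd
  exact (isUnit_iff_isUnit_det _).mp hpd.isUnit

theorem posDef_transpose_mul_self_sub_diagonal {p k : Type*} [Fintype p] [Fintype k]
    [DecidableEq k] (N : Matrix p k ℝ) {d : k → ℝ} (hd : ∀ j, d j ≤ 0)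
    (hN : ∀ z, N *ᵥ z = 0 → (∀ j, d j ≠ 0 → z j = 0) → z = 0) :
    (Nᵀ * N - diagonal d).PosDef := by
  refine PosDef.of_dotProduct_mulVec_pos ?_ fun z hz => ?_
  · rw [IsHermitian, conjTranspose_eq_transpose_of_trivial, transpose_sub, transpose_mul,
      transpose_transpose, diagonal_transpose]
  have hquad : star z ⬝ᵥ (Nᵀ * N - diagonal d) *ᵥ z
      = (N *ᵥ z) ⬝ᵥ (N *ᵥ z) + ∑ j, -d j * (z j * z j) := by
    rw [star_trivial, sub_mulVec, dotProduct_sub, ← mulVec_mulVec, dotProduct_mulVec,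
      vecMul_transpose]
    simp only [dotProduct, mulVec_diagonal]
    rw [sub_eq_add_neg, ← Finset.sum_neg_distrib]
    exact congrArg _ (Finset.sum_congr rfl fun j _ => by ring)
  have hsq : 0 ≤ (N *ᵥ z) ⬝ᵥ (N *ᵥ z) := Finset.sum_nonneg fun _ _ => mul_self_nonneg _
  have hterm : ∀ j ∈ Finset.univ, 0 ≤ -d j * (z j * z j) :=
    fun j _ => mul_nonneg (neg_nonneg.mpr (hd j)) (mul_self_nonneg _)
  rw [hquad]
  by_contra hle
  have hNz : (N *ᵥ z) ⬝ᵥ (N *ᵥ z) = 0 := by linarith [Finset.sum_nonneg hterm]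
  have hsum : ∑ j, -d j * (z j * z j) = 0 := by linarith [Finset.sum_nonneg hterm]
  refine hz (hN z (dotProduct_self_eq_zero.mp hNz) fun j hj => ?_)
  have := (Finset.sum_eq_zero_iff_of_nonneg hterm).mp hsum j (Finset.mem_univ j)
  simpa [hj] using this

theorem mul_diagonal_mul_sub_diagonal_mulVec_eq_zero {R k l : Type*} [CommRing R] [Fintype k]
    [DecidableEq k] (M : Matrix l k R) (N : Matrix k k R) {d e v : k → R}
    (hdv : ∀ j, d j * v j = 0) : (M * diagonal d * (N * diagonal d - diagonal e)) *ᵥ v = 0 := by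
  have hd : diagonal d *ᵥ v = 0 := funext fun j => by rw [mulVec_diagonal, hdv j, Pi.zero_apply]
  have hde : diagonal d *ᵥ (diagonal e *ᵥ v) = 0 := funext fun j => by
    rw [mulVec_diagonal, mulVec_diagonal, mul_left_comm, hdv j, mul_zero, Pi.zero_apply]
  simp only [← mulVec_mulVec, sub_mulVec, mulVec_sub, hd, hde, mulVec_zero, sub_zero]

end Matrix

theorem LinearIndependent.eq_zero_of_sum_smul_eq_sum_smul {ι κ R V : Type*} [Ring R]
    [AddCommGroup V] [Module R V] [Fintype ι] [Fintype κ] {a : ι → V} {b : κ → V}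
    {q : κ → Prop} (hli : LinearIndependent R (Sum.elim a fun j : {j // q j} => b j))
    {u : ι → R} {z : κ → R} (hz : ∀ j, ¬ q j → z j = 0)
    (h : ∑ i, u i • a i = ∑ j, z j • b j) : z = 0 := by
  classical
  have hsub : ∑ j : {j // q j}, z j • b j = ∑ j, z j • b j := by
    rw [← Fintype.sum_subtype_add_sum_subtype q fun j => z j • b j, left_eq_add]
    exact Finset.sum_eq_zero fun j _ => by rw [hz j j.2, zero_smul]
  have hcoeff := Fintype.linearIndependent_iff.mp hli (Sum.elim u fun j => -z j) (by
    simp only [Fintype.sum_sum_type, Sum.elim_inl, Sum.elim_inr, neg_smul,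
      Finset.sum_neg_distrib, hsub, h, add_neg_cancel])
  funext j
  by_cases hj : q j
  · simpa using hcoeff (Sum.inr ⟨j, hj⟩)
  · exact hz j hj

section KKT

variable {n m k : ℕ} {θ : (Fin n → ℝ) → ℝ} {h : Fin m → (Fin n → ℝ) → ℝ}
  {g : Fin k → (Fin n → ℝ) → ℝ} {x : Fin n → ℝ}

theorem matH_eq_kerProj : matH h x = kerProj (matA h x) := rfl

theorem matA_transpose_mulVec (u : Fin m → ℝ) :
    (matA h x)ᵀ *ᵥ u = ∑ i, u i • grad (h i) x := by
  rw [mulVec_transpose, vecMul_eq_sum]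
  rfl

theorem matB_transpose_mulVec (z : Fin k → ℝ) :
    (matB g x)ᵀ *ᵥ z = ∑ j, z j • grad (g j) x := by
  rw [mulVec_transpose, vecMul_eq_sum]
  rfl

theorem isUnit_det_matA_mul_transpose (hH2 : hypH2 h g) (hx : x ∈ feas h g) :
    IsUnit (matA h x * (matA h x)ᵀ).det :=
  isUnit_det_mul_transpose_of_linearIndependent ((hH2 x hx).comp Sum.inl Sum.inl_injective)

theorem isUnit_det_matQ (hH2 : hypH2 h g) (hx : x ∈ feas h g) : IsUnit (matQ h g x).det := by
  have hpd : (matQ h g x).PosDef := by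
    rw [matQ, matH_eq_kerProj, mul_kerProj_mul_transpose (isUnit_det_matA_mul_transpose hH2 hx)]
    refine posDef_transpose_mul_self_sub_diagonal _ hx.2 fun z hz hsupp => ?_
    obtain ⟨u, hu⟩ := exists_transpose_mulVec_eq_of_kerProj_mulVec_eq_zero
      (w := (matB g x)ᵀ *ᵥ z) (by rwa [mulVec_mulVec])
    rw [matA_transpose_mulVec, matB_transpose_mulVec] at hu
    exact (hH2 x hx).eq_zero_of_sum_smul_eq_sum_smul hsupp hu
  exact (isUnit_iff_isUnit_det _).mp hpd.isUnit

theorem grad_eq_of_stationary {lam : Fin m → ℝ} {mu : Fin k → ℝ}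
    (hstat : grad θ x + ∑ i, lam i • grad (h i) x + ∑ j, mu j • grad (g j) x = 0) :
    grad θ x = -((matA h x)ᵀ *ᵥ lam) - (matB g x)ᵀ *ᵥ mu := by
  rw [matA_transpose_mulVec, matB_transpose_mulVec, sub_eq_add_neg, ← neg_add,
    eq_neg_iff_add_eq_zero, ← add_assoc, hstat]

theorem vecv_eq_neg {lam : Fin m → ℝ} {mu : Fin k → ℝ}
    (hA : IsUnit (matA h x * (matA h x)ᵀ).det) (hQ : IsUnit (matQ h g x).det)
    (hcomp : ∀ j, mu j * g j x = 0)
    (hgrad : grad θ x = -((matA h x)ᵀ *ᵥ lam) - (matB g x)ᵀ *ᵥ mu) :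
    vecv θ h g x = -mu := by
  have hdiag : diagonal (fun j => g j x) *ᵥ mu = 0 :=
    funext fun j => by rw [mulVec_diagonal, mul_comm, hcomp j, Pi.zero_apply]
  have hBH : (matB g x * matH h x) *ᵥ grad θ x = -(matQ h g x *ᵥ mu) := by
    rw [hgrad, mulVec_sub, mulVec_neg, mulVec_mulVec, Matrix.mul_assoc, matH_eq_kerProj,
      kerProj_mul_transpose hA, Matrix.mul_zero, zero_mulVec, neg_zero, zero_sub, mulVec_mulVec,
      matQ, sub_mulVec, hdiag, sub_zero, matH_eq_kerProj]
  rw [vecv, matP, Matrix.mul_assoc, ← mulVec_mulVec, hBH, mulVec_neg, mulVec_mulVec,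
    nonsing_inv_mul _ hQ, one_mulVec]

theorem transpose_matQ : (matQ h g x)ᵀ = matQ h g x := by
  rw [matQ, transpose_sub, transpose_mul, transpose_mul, transpose_transpose, matH_eq_kerProj,
    transpose_kerProj, diagonal_transpose, Matrix.mul_assoc]

theorem transpose_matP_mul_matQ (hQ : IsUnit (matQ h g x).det) :
    (matP h g x)ᵀ * matQ h g x = matH h x * (matB g x)ᵀ := by
  rw [matP, transpose_mul, transpose_mul, transpose_nonsing_inv, transpose_matQ, matH_eq_kerProj,
    transpose_kerProj, Matrix.mul_assoc, Matrix.mul_assoc, nonsing_inv_mul _ hQ, Matrix.mul_one]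

theorem matH_sub_mulVec_grad_eq_zero {lam : Fin m → ℝ} {mu : Fin k → ℝ}
    (hA : IsUnit (matA h x * (matA h x)ᵀ).det) (hQ : IsUnit (matQ h g x).det)
    (hcomp : ∀ j, mu j * g j x = 0)
    (hgrad : grad θ x = -((matA h x)ᵀ *ᵥ lam) - (matB g x)ᵀ *ᵥ mu) :
    (matH h x - (matP h g x)ᵀ * matQ h g x * matP h g x) *ᵥ grad θ x = 0 := by
  have hv : matP h g x *ᵥ grad θ x = -mu := vecv_eq_neg hA hQ hcomp hgrad
  rw [sub_mulVec, transpose_matP_mul_matQ hQ, ← mulVec_mulVec, hv, hgrad, mulVec_sub,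
    mulVec_neg, mulVec_mulVec, matH_eq_kerProj, kerProj_mul_transpose hA, zero_mulVec,
    ← mulVec_mulVec]
  simp only [mulVec_neg]
  abel

end KKT

theorem stmt_10_general
    {n m k : ℕ}
    (θ : (Fin n → ℝ) → ℝ) (h : Fin m → (Fin n → ℝ) → ℝ) (g : Fin k → (Fin n → ℝ) → ℝ)
    (hH2 : hypH2 h g)
    (R1 : (Fin n → ℝ) → Matrix (Fin n) (Fin n) ℝ)
    (R2 : (Fin n → ℝ) → Matrix (Fin k) (Fin k) ℝ)
    (a b c : Fin k → (Fin n → ℝ) → ℝ) (p : Fin k → ℕ) :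
    ∀ x ∈ KKTset θ h g, vecF θ h g R1 R2 a b c p x = 0 := by
  rintro x ⟨hx, lam, mu, hmu, hstat, hcompl⟩
  have hA := isUnit_det_matA_mul_transpose hH2 hx
  have hQ := isUnit_det_matQ hH2 hx
  have hcomp : ∀ j, mu j * g j x = 0 := fun j =>
    (Finset.sum_eq_zero_iff_of_nonpos fun j _ => mul_nonpos_of_nonneg_of_nonpos (hmu j) (hx.2 j)).mp
      hcompl j (Finset.mem_univ j)
  have hgrad := grad_eq_of_stationary hstat
  have hv := vecv_eq_neg hA hQ hcomp hgrad
  have hgv : ∀ j, g j x * vecv θ h g x j = 0 := fun j => by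
    rw [hv, Pi.neg_apply, mul_neg, mul_comm, hcomp j, neg_zero]
  have hpos : pPart (vecv θ h g x) = 0 := funext fun j => by simp [pPart, hv, hmu j]
  rw [vecF, ← mulVec_mulVec, ← mulVec_mulVec, matH_sub_mulVec_grad_eq_zero hA hQ hcomp hgrad,
    mul_diagonal_mul_sub_diagonal_mulVec_eq_zero _ _ hgv, hpos]
  simp only [mulVec_zero, neg_zero, sub_zero]

/-- Every KKT point is an equilibrium of the vector field: `x ∈ Φ → F(x) = 0`. -/
theorem stmt_10
    {n m k : ℕ} (hmn : m < n)
    (θ : (Fin n → ℝ) → ℝ) (h : Fin m → (Fin n → ℝ) → ℝ) (g : Fin k → (Fin n → ℝ) → ℝ)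
    (hθ : ContDiff ℝ 2 θ) (hhC : ∀ i, ContDiff ℝ 2 (h i)) (hgC : ∀ j, ContDiff ℝ 2 (g j))
    (hH1 : hypH1 θ h g) (hH2 : hypH2 h g)
    (R1 : (Fin n → ℝ) → Matrix (Fin n) (Fin n) ℝ)
    (R2 : (Fin n → ℝ) → Matrix (Fin k) (Fin k) ℝ)
    (a b c : Fin k → (Fin n → ℝ) → ℝ) (p : Fin k → ℕ)
    (hR1C : ∀ i j, ContDiff ℝ 1 fun x => R1 x i j)
    (hR1pd : ∀ x, (R1 x).PosDef)
    (hR2C : ∀ i j, ContDiff ℝ 1 fun x => R2 x i j)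
    (hR2psd : ∀ x, (R2 x).PosSemidef)
    (haC : ∀ j, ContDiff ℝ 1 (a j)) (hbC : ∀ j, ContDiff ℝ 1 (b j))
    (hcC : ∀ j, ContDiff ℝ 1 (c j))
    (ha0 : ∀ j x, 0 ≤ a j x) (hb0 : ∀ j x, 0 ≤ b j x) (hc0 : ∀ j x, 0 ≤ c j x)
    (hbc : ∀ x ∈ feas h g, ∀ j, 0 < b j x + c j x)
    (hpd : ∀ x ∈ feas h g, (R2 x).PosDef ∨ (Matrix.diagonal fun j => a j x).PosDef)
    (hp : ∀ j, 1 ≤ p j) :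
    ∀ x ∈ KKTset θ h g, vecF θ h g R1 R2 a b c p x = 0 :=
  stmt_10_general θ h g hH2 R1 R2 a b c p
end
end
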